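/- arXiv:1309.2566 — 3 statements merged into one kernel-verified Lean document; each statement's English description precedes it below -/
import Mathlib

section
/- Let (Mₙ)_{n≥1} be i.i.d. random 3×3 stochastic matrices, each equal to the identity with one uniformly chosen row (out of three) replaced by an independent splitting ratio P. Suppose the rows L⁽¹⁾ₙ, L⁽²⁾ₙ, L⁽³⁾ₙ of the product Sₙ = Mₙ⋯M₁ converge a.s. along a subsequence to L⁽¹⁾, L⁽²⁾, L⁽³⁾. Then a.s. L⁽¹⁾ = L⁽²⁾ = L⁽³⁾. -/
/-! Let `D s` be the diameter of the set of rows of `s`. The rows of `m * s` with `m` stochastic are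
convex combinations of the rows of `s`, so `D (Sₙ)` is nonincreasing. If two consecutive factors
replace two different rows by ratios whose coordinates are all at least `ε`, then every pair of
rows of the product contains a freshly averaged row, and `D` shrinks by the factor `1 - ε`.
This happens at the steps `(2k+1, 2k+2)` with probability bounded below uniformly in `k`, and
these events are independent, so by the second Borel–Cantelli lemma it happens infinitely often
almost surely. Hence `D (Sₙ) → 0`, and the rows of any subsequential limit coincide. -/

open MeasureTheory ProbabilityTheory Filter

instance : MeasurableSpace (Matrix (Fin 3) (Fin 3) ℝ) :=
  inferInstanceAs (MeasurableSpace (Fin 3 → Fin 3 → ℝ))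

/-- The identity matrix with its `i`-th row replaced by the vector `p`. -/
noncomputable def rowReplaceMatrix (p : Fin 3 → ℝ) (i : Fin 3) :
    Matrix (Fin 3) (Fin 3) ℝ :=
  fun r c => if r = i then p c else if r = c then 1 else 0

/-- The common law of the random matrices: pick a splitting ratio according to
`ν` and a uniform row index, and form the identity with that row replaced. -/
noncomputable def randomMatrixLaw (ν : Measure (Fin 3 → ℝ)) :
    Measure (Matrix (Fin 3) (Fin 3) ℝ) :=
  Measure.map (fun q : (Fin 3 → ℝ) × Fin 3 => rowReplaceMatrix q.1 q.2)
    (ν.prod (PMF.uniformOfFintype (Fin 3)).toMeasure)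

open Set Metric Matrix Topology

instance : BorelSpace (Matrix (Fin 3) (Fin 3) ℝ) :=
  inferInstanceAs (BorelSpace (Fin 3 → Fin 3 → ℝ))

section RowDiameter

variable {ι E : Type*}

lemma dist_le_diam_range [Finite ι] [PseudoMetricSpace E] (s : ι → E) (i j : ι) :
    dist (s i) (s j) ≤ diam (range s) :=
  dist_le_diam_of_mem (finite_range s).isBounded (mem_range_self i) (mem_range_self j)

lemma diam_range_le_of_pairwise [PseudoMetricSpace E] {s : ι → E} {C : ℝ} (hC : 0 ≤ C)
    (h : Pairwise fun j k => dist (s j) (s k) ≤ C) : diam (range s) ≤ C := by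
  refine diam_le_of_forall_dist_le hC ?_
  rintro _ ⟨j, rfl⟩ _ ⟨k, rfl⟩
  rcases eq_or_ne j k with rfl | hjk
  · simpa using hC
  · exact h hjk

lemma eq_of_tendsto_of_tendsto_diam_range_zero [Finite ι] [MetricSpace E] {α : Type*}
    {l : Filter α} [l.NeBot] {F : α → ι → E} {G : ι → E} (hF : Tendsto F l (𝓝 G))
    (hdiam : Tendsto (fun a => diam (range (F a))) l (𝓝 0)) (i j : ι) : G i = G j := by
  have hdist : Tendsto (fun a => dist (F a i) (F a j)) l (𝓝 (dist (G i) (G j))) :=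
    (tendsto_pi_nhds.1 hF i).dist (tendsto_pi_nhds.1 hF j)
  exact dist_le_zero.1 <|
    le_of_tendsto_of_tendsto' hdist hdiam fun a => dist_le_diam_range (F a) i j

variable [Fintype ι] [NormedAddCommGroup E] [NormedSpace ℝ E]

lemma dist_sum_smul_le {w : ι → ℝ} (hw : w ∈ stdSimplex ℝ ι) (s : ι → E) (j : ι) :
    dist (∑ k, w k • s k) (s j) ≤ (1 - w j) * diam (range s) := by
  classical
  have hsub : ∑ k, w k • s k - s j = ∑ k, w k • (s k - s j) := by
    simp [smul_sub, Finset.sum_sub_distrib, ← Finset.sum_smul, hw.2]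
  rw [dist_eq_norm, hsub]
  calc ‖∑ k, w k • (s k - s j)‖ ≤ ∑ k, w k * dist (s k) (s j) := by
        refine (norm_sum_le _ _).trans (Finset.sum_le_sum fun k _ => ?_)
        rw [norm_smul, Real.norm_of_nonneg (hw.1 k), dist_eq_norm]
    _ = ∑ k ∈ Finset.univ.erase j, w k * dist (s k) (s j) :=
        (Finset.sum_erase _ (by simp)).symm
    _ ≤ ∑ k ∈ Finset.univ.erase j, w k * diam (range s) := by
        gcongr with k
        · exact hw.1 k
        · exact dist_le_diam_range s k j
    _ = (1 - w j) * diam (range s) := by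
        rw [← Finset.sum_mul, Finset.sum_erase_eq_sub (Finset.mem_univ j), hw.2]

lemma diam_range_le_of_forall_mem_convexHull {ι' : Type*} {s : ι → E} {t : ι' → E}
    (h : ∀ i, t i ∈ convexHull ℝ (range s)) : diam (range t) ≤ diam (range s) := by
  rw [← convexHull_diam (range s)]
  exact diam_mono (range_subset_iff.2 h) (isBounded_convexHull.2 (finite_range s).isBounded)

end RowDiameter

section StochasticMatrix

variable {ι κ : Type*} [Fintype ι] [DecidableEq ι] [Fintype κ]

lemma row_mem_stdSimplex {m : Matrix ι ι ℝ} (hm : m ∈ rowStochastic ℝ ι) (i : ι) :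
    m i ∈ stdSimplex ℝ ι :=
  ⟨fun _ => nonneg_of_mem_rowStochastic hm, sum_row_of_mem_rowStochastic hm i⟩

lemma updateRow_mem_rowStochastic {m : Matrix ι ι ℝ} (hm : m ∈ rowStochastic ℝ ι) {p : ι → ℝ}
    (hp : p ∈ stdSimplex ℝ ι) (i : ι) : m.updateRow i p ∈ rowStochastic ℝ ι := by
  rw [mem_rowStochastic_iff_sum]
  constructor
  · intro r c
    rcases eq_or_ne r i with rfl | hr
    · simpa using hp.1 c
    · simpa [updateRow_ne hr] using nonneg_of_mem_rowStochastic hm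
  · intro r
    rcases eq_or_ne r i with rfl | hr
    · simpa using hp.2
    · simpa [updateRow_ne hr] using sum_row_of_mem_rowStochastic hm r

lemma diam_range_mul_le {m : Matrix ι ι ℝ} (hm : m ∈ rowStochastic ℝ ι) (s : Matrix ι κ ℝ) :
    diam (range (m * s)) ≤ diam (range s) :=
  diam_range_le_of_forall_mem_convexHull fun i => by
    rw [mul_apply_eq_vecMul, vecMul_eq_sum]
    exact (convex_convexHull ℝ _).sum_mem (fun k _ => (row_mem_stdSimplex hm i).1 k)
      (row_mem_stdSimplex hm i).2 fun k _ => subset_convexHull ℝ _ (mem_range_self k)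

lemma dist_updateRow_vecMul_le {w : ι → ℝ} (hw : w ∈ stdSimplex ℝ ι) {ε : ℝ}
    (hε : ∀ k, ε ≤ w k) (s : Matrix ι κ ℝ) (i j : ι) :
    dist (s.updateRow i (w ᵥ* s) i) (s.updateRow i (w ᵥ* s) j) ≤ (1 - ε) * diam (range s) := by
  rcases eq_or_ne j i with rfl | hji
  · rw [dist_self]
    exact mul_nonneg (by linarith [hε j, (mem_Icc_of_mem_stdSimplex hw j).2]) diam_nonneg
  · rw [updateRow_self, updateRow_ne hji, vecMul_eq_sum]
    exact (dist_sum_smul_le hw s j).trans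
      (mul_le_mul_of_nonneg_right (by linarith [hε j]) diam_nonneg)

end StochasticMatrix

section RowReplace

variable {κ : Type*}

lemma rowReplaceMatrix_eq_updateRow (p : Fin 3 → ℝ) (i : Fin 3) :
    rowReplaceMatrix p i = updateRow 1 i p := by
  ext r c
  rcases eq_or_ne r i with rfl | hr
  · simp [rowReplaceMatrix]
  · simp [rowReplaceMatrix, hr, one_apply]

lemma rowReplaceMatrix_mul (p : Fin 3 → ℝ) (i : Fin 3) (s : Matrix (Fin 3) κ ℝ) :
    rowReplaceMatrix p i * s = s.updateRow i (p ᵥ* s) := by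
  rw [rowReplaceMatrix_eq_updateRow, updateRow_mul, Matrix.one_mul]

lemma rowReplaceMatrix_mem_rowStochastic {p : Fin 3 → ℝ} (hp : p ∈ stdSimplex ℝ (Fin 3))
    (i : Fin 3) : rowReplaceMatrix p i ∈ rowStochastic ℝ (Fin 3) := by
  rw [rowReplaceMatrix_eq_updateRow]
  exact updateRow_mem_rowStochastic (one_mem _) hp i

lemma continuous_rowReplaceMatrix (i : Fin 3) : Continuous fun p => rowReplaceMatrix p i := by
  simp only [rowReplaceMatrix_eq_updateRow]
  exact continuous_const.matrix_updateRow i continuous_id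

lemma diam_range_rowReplaceMatrix_mul_rowReplaceMatrix_mul_le [Fintype κ] {p q : Fin 3 → ℝ}
    {ε : ℝ} (hp : p ∈ stdSimplex ℝ (Fin 3)) (hq : q ∈ stdSimplex ℝ (Fin 3)) (hpε : ∀ k, ε ≤ p k)
    (hqε : ∀ k, ε ≤ q k) {i₁ i₂ : Fin 3} (hi : i₁ ≠ i₂) (s : Matrix (Fin 3) κ ℝ) :
    diam (range (rowReplaceMatrix q i₂ * (rowReplaceMatrix p i₁ * s))) ≤
      (1 - ε) * diam (range s) := by
  set t := rowReplaceMatrix p i₁ * s with ht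
  have hts : diam (range t) ≤ diam (range s) :=
    diam_range_mul_le (rowReplaceMatrix_mem_rowStochastic hp i₁) s
  have near_i₂ : ∀ j, dist ((t.updateRow i₂ (q ᵥ* t)) i₂) ((t.updateRow i₂ (q ᵥ* t)) j) ≤
      (1 - ε) * diam (range s) := fun j =>
    (dist_updateRow_vecMul_le hq hqε t i₂ j).trans
      (mul_le_mul_of_nonneg_left hts (by linarith [hpε i₁, (mem_Icc_of_mem_stdSimplex hp i₁).2]))
  have near_i₁ : ∀ j ≠ i₂, dist ((t.updateRow i₂ (q ᵥ* t)) i₁) ((t.updateRow i₂ (q ᵥ* t)) j) ≤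
      (1 - ε) * diam (range s) := fun j hj => by
    rw [updateRow_ne hi, updateRow_ne hj, ht, rowReplaceMatrix_mul]
    exact dist_updateRow_vecMul_le hp hpε s i₁ j
  rw [rowReplaceMatrix_mul q]
  refine diam_range_le_of_pairwise ((near_i₂ i₂).trans' dist_nonneg) fun j k hjk => ?_
  -- with only three rows, every pair of distinct rows meets `{i₁, i₂}`
  rcases (by omega : j = i₂ ∨ k = i₂ ∨ (j = i₁ ∧ k ≠ i₂) ∨ (k = i₁ ∧ j ≠ i₂)) with
    rfl | rfl | ⟨rfl, hk⟩ | ⟨rfl, hj⟩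
  · exact near_i₂ k
  · rw [dist_comm]; exact near_i₂ j
  · exact near_i₁ k hk
  · rw [dist_comm]; exact near_i₁ j hj

end RowReplace

lemma tendsto_zero_of_antitone_of_frequently_le_mul {d : ℕ → ℝ} {c : ℝ} {k : ℕ}
    (hd : Antitone d) (hd0 : ∀ n, 0 ≤ d n) (hc : c < 1)
    (h : ∃ᶠ n in atTop, d (n + k) ≤ c * d n) : Tendsto d atTop (𝓝 0) := by
  have hbdd : BddBelow (range d) := ⟨0, forall_mem_range.2 hd0⟩
  have hlim := tendsto_atTop_ciInf hd hbdd
  have hl0 : 0 ≤ ⨅ n, d n := le_ciInf hd0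
  have hlc : ⨅ n, d n ≤ c * ⨅ n, d n :=
    ge_of_tendsto_of_frequently (hlim.const_mul c)
      (h.mono fun n hn => (ciInf_le hbdd (n + k)).trans hn)
  rwa [show ⨅ n, d n = 0 by nlinarith] at hlim

section SplittingRatio

variable {ι : Type*} [Fintype ι]

variable (ι) in
def stdSimplexGe (ε : ℝ) : Set (ι → ℝ) := stdSimplex ℝ ι ∩ {p | ∀ k, ε ≤ p k}

lemma isCompact_stdSimplexGe (ε : ℝ) : IsCompact (stdSimplexGe ι ε) :=
  (isCompact_stdSimplex ℝ ι).inter_right <| by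
    simpa only [ofPred_forall] using isClosed_iInter fun k =>
      isClosed_le continuous_const (continuous_apply (A := fun _ : ι => ℝ) k)

lemma exists_pos_measure_stdSimplexGe_ne_zero {ν : Measure (ι → ℝ)} [NeZero ν]
    (hν : ∀ᵐ p ∂ν, p ∈ stdSimplex ℝ ι ∧ ∀ i, 0 < p i) :
    ∃ ε > 0, ν (stdSimplexGe ι ε) ≠ 0 := by
  by_contra! h
  have hnull : ν (⋃ n : ℕ, stdSimplexGe ι (1 / (n + 1))) = 0 :=
    measure_iUnion_null fun n => h _ Nat.one_div_pos_of_nat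
  have hcover : ∀ᵐ p ∂ν, p ∈ ⋃ n : ℕ, stdSimplexGe ι (1 / (n + 1)) := by
    filter_upwards [hν] with p ⟨hp, hpos⟩
    obtain ⟨n, hn⟩ := (eventually_all.2 fun i =>
      tendsto_one_div_add_atTop_nhds_zero_nat.eventually (eventually_le_nhds (hpos i))).exists
    exact mem_iUnion.2 ⟨n, hp, hn⟩
  have : ∀ᵐ p ∂ν, False := by
    filter_upwards [hcover, measure_eq_zero_iff_ae_notMem.1 hnull] with p h₁ h₂ using h₂ h₁
  exact NeZero.ne ν (ae_eq_bot.1 (eventually_false_iff_eq_bot.1 this))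

end SplittingRatio

def rowReplaceMatrices (ε : ℝ) (i : Fin 3) : Set (Matrix (Fin 3) (Fin 3) ℝ) :=
  (rowReplaceMatrix · i) '' stdSimplexGe (Fin 3) ε

lemma measurableSet_rowReplaceMatrices (ε : ℝ) (i : Fin 3) :
    MeasurableSet (rowReplaceMatrices ε i) :=
  ((isCompact_stdSimplexGe ε).image (continuous_rowReplaceMatrix i)).isClosed.measurableSet

lemma measurable_rowReplaceMatrix_uncurry :
    Measurable fun q : (Fin 3 → ℝ) × Fin 3 => rowReplaceMatrix q.1 q.2 :=
  measurable_from_prod_countable_left fun i => (continuous_rowReplaceMatrix i).measurable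

section RandomMatrixLaw

variable {ν : Measure (Fin 3 → ℝ)}

lemma measure_stdSimplexGe_div_three_le_randomMatrixLaw (ε : ℝ) (i : Fin 3) :
    ν (stdSimplexGe (Fin 3) ε) / 3 ≤ randomMatrixLaw ν (rowReplaceMatrices ε i) := by
  rw [randomMatrixLaw, Measure.map_apply measurable_rowReplaceMatrix_uncurry
    (measurableSet_rowReplaceMatrices ε i)]
  calc ν (stdSimplexGe (Fin 3) ε) / 3
      = (ν.prod (PMF.uniformOfFintype (Fin 3)).toMeasure) (stdSimplexGe (Fin 3) ε ×ˢ {i}) := by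
        rw [Measure.prod_prod, PMF.toMeasure_apply_singleton _ _ (measurableSet_singleton i),
          PMF.uniformOfFintype_apply]
        simp [div_eq_mul_inv]
    _ ≤ _ := by
        refine measure_mono ?_
        rintro ⟨p, j⟩ ⟨hp, rfl⟩
        exact ⟨p, hp, rfl⟩

lemma ae_randomMatrixLaw_mem_rowStochastic (hν : ∀ᵐ p ∂ν, p ∈ stdSimplex ℝ (Fin 3)) :
    ∀ᵐ m ∂randomMatrixLaw ν, m ∈ rowStochastic ℝ (Fin 3) := by
  have hmem : ∀ᵐ m ∂randomMatrixLaw ν, m ∈ ⋃ i, rowReplaceMatrices 0 i := by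
    refine (ae_map_iff measurable_rowReplaceMatrix_uncurry.aemeasurable
      (MeasurableSet.iUnion fun i => measurableSet_rowReplaceMatrices 0 i)).2 ?_
    filter_upwards [Measure.quasiMeasurePreserving_fst.ae hν] with q hq
    exact mem_iUnion.2 ⟨q.2, q.1, ⟨hq, hq.1⟩, rfl⟩
  filter_upwards [hmem] with m hm
  obtain ⟨i, p, hp, rfl⟩ := mem_iUnion.1 hm
  exact rowReplaceMatrix_mem_rowStochastic hp.1 i

end RandomMatrixLaw

namespace ProbabilityTheory

variable {Ω ι κ : Type*} [MeasurableSpace Ω] {μ : Measure Ω}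

lemma iIndepFun.iIndepSet_preimage {β : Type*} [MeasurableSpace β] {f : ι → Ω → β}
    (hf : iIndepFun f μ) (hmeas : ∀ i, Measurable (f i)) {T : ι → Set β}
    (hT : ∀ i, MeasurableSet (T i)) : iIndepSet (fun i => f i ⁻¹' T i) μ :=
  (iIndepSet_iff_meas_biInter fun i => hmeas i (hT i)).2 fun s =>
    hf.measure_inter_preimage_eq_mul s fun i _ => hT i

lemma iIndepSet.biInter_of_pairwise_disjoint [DecidableEq ι] {B : ι → Set Ω}
    (hB : ∀ j, MeasurableSet (B j)) (h : iIndepSet B μ) {g : κ → Finset ι}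
    (hg : Pairwise fun k k' => Disjoint (g k) (g k')) :
    iIndepSet (fun k => ⋂ j ∈ g k, B j) μ := by
  refine (iIndepSet_iff_meas_biInter fun k => Finset.measurableSet_biInter _ fun j _ => hB j).2
    fun s => ?_
  calc μ (⋂ k ∈ s, ⋂ j ∈ g k, B j) = μ (⋂ j ∈ s.biUnion g, B j) := by
        rw [Finset.set_biInter_biUnion]
    _ = ∏ j ∈ s.biUnion g, μ (B j) := h.meas_biInter _
    _ = ∏ k ∈ s, ∏ j ∈ g k, μ (B j) := Finset.prod_biUnion (hg.set_pairwise _)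
    _ = ∏ k ∈ s, μ (⋂ j ∈ g k, B j) := by simp only [h.meas_biInter]

end ProbabilityTheory

lemma ae_frequently_rowReplaceMatrices {Ω : Type*} [MeasurableSpace Ω] {μ : Measure Ω}
    {ν : Measure (Fin 3 → ℝ)} {M : ℕ → Ω → Matrix (Fin 3) (Fin 3) ℝ}
    (hMmeas : ∀ n, Measurable (M n)) (hMindep : iIndepFun M μ)
    (hMlaw : ∀ n, Measure.map (M n) μ = randomMatrixLaw ν) {ε : ℝ}
    (hε : ν (stdSimplexGe (Fin 3) ε) ≠ 0) :
    ∀ᵐ ω ∂μ, ∃ᶠ k in atTop,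
      M (2 * k + 1) ω ∈ rowReplaceMatrices ε 0 ∧ M (2 * k + 2) ω ∈ rowReplaceMatrices ε 1 := by
  -- the pair events become blocks of the single independent family `M j ⁻¹' T j`
  set T : ℕ → Set (Matrix (Fin 3) (Fin 3) ℝ) := fun j =>
    rowReplaceMatrices ε (if Even j then 1 else 0)
  set A : ℕ → Set Ω := fun k => ⋂ j ∈ ({2 * k + 1, 2 * k + 2} : Finset ℕ), M j ⁻¹' T j
  have hTmeas : ∀ j, MeasurableSet (T j) := fun j => measurableSet_rowReplaceMatrices _ _
  have hAmeas : ∀ k, MeasurableSet (A k) := fun k =>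
    Finset.measurableSet_biInter _ fun j _ => hMmeas j (hTmeas j)
  have hB := hMindep.iIndepSet_preimage hMmeas hTmeas
  have hA : iIndepSet A μ := hB.biInter_of_pairwise_disjoint (fun j => hMmeas j (hTmeas j))
    fun k k' hkk' => by simp only [Finset.disjoint_left]; grind
  have hμA : ∀ k, (ν (stdSimplexGe (Fin 3) ε) / 3) ^ 2 ≤ μ (A k) := fun k => by
    rw [hB.meas_biInter, Finset.prod_pair (by omega), sq]
    gcongr <;>
      rw [← Measure.map_apply (hMmeas _) (hTmeas _), hMlaw] <;>
      exact measure_stdSimplexGe_div_three_le_randomMatrixLaw _ _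
  have hsum : ∑' k, μ (A k) = ⊤ := top_unique <|
    (ENNReal.tsum_const_eq_top_of_ne_zero (by simpa using hε)).symm.le.trans
      (ENNReal.tsum_le_tsum hμA)
  have := hA.isProbabilityMeasure
  have hlimsup : ∀ᵐ ω ∂μ, ω ∈ limsup A atTop :=
    (ae_mem_iff_measure_eq (MeasurableSet.measurableSet_limsup hAmeas).nullMeasurableSet).2
      (by rw [measure_limsup_eq_one hAmeas hA hsum, measure_univ])
  filter_upwards [hlimsup] with ω hω
  refine (mem_limsup_iff_frequently_mem.1 hω).mono fun k hk => ?_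
  simpa [A, T, Nat.even_add_one, parity_simps] using hk

theorem subsequential_limit_rows_equal_general
    {Ω : Type*} [MeasurableSpace Ω] (μ : Measure Ω) [IsProbabilityMeasure μ]
    (ν : Measure (Fin 3 → ℝ)) [IsProbabilityMeasure ν]
    (hνpos : ∀ᵐ p ∂ν, ∀ i, 0 < p i)
    (hνsum : ∀ᵐ p ∂ν, p 0 + p 1 + p 2 = 1)
    (M : ℕ → Ω → Matrix (Fin 3) (Fin 3) ℝ)
    (hMmeas : ∀ n, Measurable (M n))
    (hMindep : iIndepFun M μ)
    (hMlaw : ∀ n, Measure.map (M n) μ = randomMatrixLaw ν)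
    (S : ℕ → Ω → Matrix (Fin 3) (Fin 3) ℝ)
    (hSrec : ∀ n ω, S (n + 1) ω = M (n + 1) ω * S n ω)
    (φ : ℕ → ℕ) (hφ : StrictMono φ)
    (L : Ω → Matrix (Fin 3) (Fin 3) ℝ)
    (hconv : ∀ᵐ ω ∂μ, Tendsto (fun k => S (φ k) ω) atTop (nhds (L ω))) :
    ∀ᵐ ω ∂μ, L ω 0 = L ω 1 ∧ L ω 1 = L ω 2 := by
  have hν : ∀ᵐ p ∂ν, p ∈ stdSimplex ℝ (Fin 3) ∧ ∀ i, 0 < p i := by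
    filter_upwards [hνpos, hνsum] with p hp hs
    exact ⟨⟨fun i => (hp i).le, by simpa [Fin.sum_univ_three] using hs⟩, hp⟩
  obtain ⟨ε, hε, hνε⟩ := exists_pos_measure_stdSimplexGe_ne_zero hν
  have hstoch : ∀ᵐ ω ∂μ, ∀ n, M n ω ∈ rowStochastic ℝ (Fin 3) :=
    ae_all_iff.2 fun n => ae_of_ae_map (hMmeas n).aemeasurable <| by
      rw [hMlaw n]
      exact ae_randomMatrixLaw_mem_rowStochastic (hν.mono fun p hp => hp.1)
  filter_upwards [hconv, hstoch, ae_frequently_rowReplaceMatrices hMmeas hMindep hMlaw hνε]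
    with ω hL hst hfreq
  have hanti : Antitone fun n => diam (range (S n ω)) :=
    antitone_nat_of_succ_le fun n => by rw [hSrec]; exact diam_range_mul_le (hst _) _
  have hcontr : ∃ᶠ n in atTop, diam (range (S (n + 2) ω)) ≤ (1 - ε) * diam (range (S n ω)) :=
    (strictMono_mul_left_of_pos two_pos).tendsto_atTop.frequently <| hfreq.mono
      fun k ⟨⟨p, hp, hpM⟩, ⟨q, hq, hqM⟩⟩ => by
        rw [hSrec, hSrec, ← hpM, ← hqM]
        exact diam_range_rowReplaceMatrix_mul_rowReplaceMatrix_mul_le hp.1 hq.1 hp.2 hq.2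
          zero_ne_one _
  have hdiam := tendsto_zero_of_antitone_of_frequently_le_mul hanti (fun _ => diam_nonneg)
    (by linarith) hcontr
  have hrows := eq_of_tendsto_of_tendsto_diam_range_zero hL (hdiam.comp hφ.tendsto_atTop)
  exact ⟨hrows 0 1, hrows 1 2⟩

/-- Let `(Mₙ)` be i.i.d. random stochastic matrices, each the identity with a
uniformly chosen row replaced by an independent splitting ratio drawn from `ν`,
and let `Sₙ = Mₙ ⋯ M₁`.  If the rows of `Sₙ` converge a.s. along a subsequence
to a limit matrix `L`, then a.s. all three rows of `L` coincide. -/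
theorem subsequential_limit_rows_equal
    {Ω : Type*} [MeasurableSpace Ω] (μ : Measure Ω) [IsProbabilityMeasure μ]
    (ν : Measure (Fin 3 → ℝ)) [IsProbabilityMeasure ν]
    (hνexch : ∀ σ : Equiv.Perm (Fin 3),
      Measure.map (fun p => p ∘ σ) ν = ν)
    (hνpos : ∀ᵐ p ∂ν, ∀ i, 0 < p i)
    (hνsum : ∀ᵐ p ∂ν, p 0 + p 1 + p 2 = 1)
    (M : ℕ → Ω → Matrix (Fin 3) (Fin 3) ℝ)
    (hMmeas : ∀ n, Measurable (M n))
    (hMindep : iIndepFun M μ)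
    (hMlaw : ∀ n, Measure.map (M n) μ = randomMatrixLaw ν)
    (S : ℕ → Ω → Matrix (Fin 3) (Fin 3) ℝ)
    (hS0 : ∀ ω, S 0 ω = 1)
    (hSrec : ∀ n ω, S (n + 1) ω = M (n + 1) ω * S n ω)
    (φ : ℕ → ℕ) (hφ : StrictMono φ)
    (L : Ω → Matrix (Fin 3) (Fin 3) ℝ)
    (hconv : ∀ᵐ ω ∂μ, Tendsto (fun k => S (φ k) ω) atTop (nhds (L ω))) :
    ∀ᵐ ω ∂μ, L ω 0 = L ω 1 ∧ L ω 1 = L ω 2 :=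
  subsequential_limit_rows_equal_general μ ν hνpos hνsum M hMmeas hMindep hMlaw S hSrec φ hφ L hconv
end

section
/- Suppose f : K → ℝ is continuous on a compact metric space K, and for each n, U_n^{(1)}, U_n^{(2)} are identically distributed K-valued random variables with ‖U_n^{(2)} − U_n^{(1)}‖ → 0 in probability, and μ_n is a random probability measure with E[⟨f, μ_n⟩] = E[f(U_n^{(1)})] and E[(⟨f, μ_n⟩ − f(U_n^{(1)}))²] = E[f(U_n^{(1)})² − f(U_n^{(1)})f(U_n^{(2)})]. Then Var(⟨f, μ_n⟩ − f(U_n^{(1)})) → 0 as n → ∞. -/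
/-!
Since `⟨f, μₙ⟩ − f(U¹ₙ)` is centred, its variance is its second moment
`E[f(U¹ₙ)(f(U¹ₙ) − f(U²ₙ))] ≤ ‖f‖∞ · E|f(U¹ₙ) − f(U²ₙ)|`. By uniform continuity of `f`,
`f(U¹ₙ) − f(U²ₙ) → 0` in probability, and being uniformly bounded it then tends to `0` in `L¹`
(Vitali).
-/

open MeasureTheory ProbabilityTheory Filter Topology

section ConvergenceInMeasure

variable {ι Ω : Type*} [MeasurableSpace Ω] {P : Measure Ω}

lemma tendstoInMeasure_sub_comp_of_uniformContinuous {K E : Type*} [PseudoMetricSpace K]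
    [SeminormedAddCommGroup E] {f : K → E} (hf : UniformContinuous f)
    {U V : ι → Ω → K} {l : Filter ι}
    (hUV : ∀ ε > (0 : ℝ), Tendsto (fun i => P {ω | ε ≤ dist (U i ω) (V i ω)}) l (𝓝 0)) :
    TendstoInMeasure P (fun i ω => f (U i ω) - f (V i ω)) l 0 := by
  rw [tendstoInMeasure_iff_norm]
  intro ε hε
  obtain ⟨δ, hδ, hfδ⟩ := Metric.uniformContinuous_iff.mp hf ε hε
  refine tendsto_of_tendsto_of_tendsto_of_le_of_le tendsto_const_nhds (hUV δ hδ)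
    (fun _ => zero_le) fun i => measure_mono fun ω hω => ?_
  simp only [Set.mem_ofPred_eq, Pi.zero_apply, sub_zero] at hω ⊢
  by_contra! hclose
  exact hω.not_gt (by simpa [dist_eq_norm] using hfδ hclose)

lemma tendsto_integral_norm_of_tendstoInMeasure_of_bound [IsFiniteMeasure P] {E : Type*}
    [NormedAddCommGroup E] {g : ℕ → Ω → E} (hg : ∀ n, AEStronglyMeasurable (g n) P)
    (C : ℝ) (hgC : ∀ n, ∀ᵐ ω ∂P, ‖g n ω‖ ≤ C) (h : TendstoInMeasure P g atTop 0) :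
    Tendsto (fun n => ∫ ω, ‖g n ω‖ ∂P) atTop (𝓝 0) := by
  have hui : UnifIntegrable g 1 P := by
    refine unifIntegrable_of le_rfl ENNReal.one_ne_top hg fun _ _ =>
      ⟨C.toNNReal + 1, fun n => ?_⟩
    have hnull : {ω | C.toNNReal + 1 ≤ ‖g n ω‖₊}.indicator (g n) =ᵐ[P] 0 := by
      filter_upwards [hgC n] with ω hω
      refine Set.indicator_of_notMem (fun hle => ?_) _
      have : (C.toNNReal : ℝ) + 1 ≤ ‖g n ω‖ := by exact_mod_cast hle
      linarith [C.le_coe_toNNReal]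
    rw [eLpNorm_congr_ae hnull, eLpNorm_zero]
    exact zero_le
  have hL1 := tendsto_Lp_finite_of_tendstoInMeasure le_rfl ENNReal.one_ne_top hg
    (g := 0) MemLp.zero hui h
  simp_rw [sub_zero, eLpNorm_one_eq_lintegral_enorm] at hL1
  simp_rw [integral_norm_eq_lintegral_enorm (hg _)]
  exact (ENNReal.tendsto_toReal ENNReal.zero_ne_top).comp hL1

end ConvergenceInMeasure

lemma sq_sub_mul_le_mul_abs_sub {a b C : ℝ} (ha : |a| ≤ C) : a ^ 2 - a * b ≤ C * |a - b| :=
  calc a ^ 2 - a * b = a * (a - b) := by ring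
    _ ≤ |a| * |a - b| := by rw [← abs_mul]; exact le_abs_self _
    _ ≤ C * |a - b| := by gcongr

lemma variance_sub_le_mul_integral_abs_sub {Ω : Type*} [MeasurableSpace Ω] {P : Measure Ω}
    {X Y Z : Ω → ℝ} {C : ℝ} (hX : Integrable X P) (hY : Integrable Y P) (hZ : Integrable Z P)
    (hYC : ∀ ω, |Y ω| ≤ C) (hmean : ∫ ω, X ω ∂P = ∫ ω, Y ω ∂P)
    (hsecond : ∫ ω, (X ω - Y ω) ^ 2 ∂P = ∫ ω, (Y ω ^ 2 - Y ω * Z ω) ∂P) :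
    variance (fun ω => X ω - Y ω) P ≤ C * ∫ ω, |Y ω - Z ω| ∂P := by
  have hcentered : ∫ ω, (X ω - Y ω) ∂P = 0 := by rw [integral_sub hX hY, hmean, sub_self]
  have hint : Integrable (fun ω => Y ω ^ 2 - Y ω * Z ω) P :=
    ((hY.sub hZ).bdd_mul hY.aestronglyMeasurable (ae_of_all _ hYC)).congr
      (ae_of_all _ fun ω => by simp only [Pi.sub_apply]; ring)
  rw [variance_of_integral_eq_zero (X := fun ω => X ω - Y ω) (hX.sub hY).aemeasurable
    hcentered, hsecond, ← integral_const_mul]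
  exact integral_mono hint ((hY.sub hZ).abs.const_mul C)
    fun ω => sq_sub_mul_le_mul_abs_sub (hYC ω)

theorem variance_integral_minus_point_tendsto_zero_general
    {Ω : Type*} [MeasurableSpace Ω] (P : Measure Ω) [IsProbabilityMeasure P]
    {K : Type*} [MetricSpace K] [CompactSpace K]
    [MeasurableSpace K] [BorelSpace K]
    (f : K → ℝ) (hf : Continuous f)
    (U1 U2 : ℕ → Ω → K)
    (hU1 : ∀ n, Measurable (U1 n)) (hU2 : ∀ n, Measurable (U2 n))
    (hdist : ∀ ε > (0 : ℝ),
      Tendsto (fun n => P {ω | ε ≤ dist (U1 n ω) (U2 n ω)}) atTop (nhds 0))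
    (μn : ℕ → Ω → Measure K)
    (hμprob : ∀ n ω, IsProbabilityMeasure (μn n ω))
    (hμmeas : ∀ n, Measurable fun ω => ∫ x, f x ∂(μn n ω))
    (hmean : ∀ n, (∫ ω, (∫ x, f x ∂(μn n ω)) ∂P) = ∫ ω, f (U1 n ω) ∂P)
    (hsecond : ∀ n,
      (∫ ω, ((∫ x, f x ∂(μn n ω)) - f (U1 n ω)) ^ 2 ∂P)
        = ∫ ω, (f (U1 n ω) ^ 2 - f (U1 n ω) * f (U2 n ω)) ∂P) :
    Tendsto
      (fun n => variance (fun ω => (∫ x, f x ∂(μn n ω)) - f (U1 n ω)) P)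
      atTop (nhds 0) := by
  set F := BoundedContinuousFunction.mkOfCompact ⟨f, hf⟩
  have hfF : ∀ x, |f x| ≤ ‖F‖ := F.norm_coe_le_norm
  have hμF : ∀ n ω, |∫ x, f x ∂(μn n ω)| ≤ ‖F‖ := fun n ω => by
    simpa using norm_integral_le_of_norm_le_const (μ := μn n ω) (f := f) (ae_of_all _ hfF)
  have hfU_int : ∀ {U : Ω → K}, Measurable U → Integrable (fun ω => f (U ω)) P := fun hU =>
    .of_bound (hf.measurable.comp hU).aestronglyMeasurable _ (ae_of_all _ fun _ => hfF _)
  have hvar : ∀ n, variance (fun ω => (∫ x, f x ∂(μn n ω)) - f (U1 n ω)) P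
      ≤ ‖F‖ * ∫ ω, |f (U1 n ω) - f (U2 n ω)| ∂P := fun n =>
    variance_sub_le_mul_integral_abs_sub
      (.of_bound (hμmeas n).aestronglyMeasurable _ (ae_of_all _ (hμF n)))
      (hfU_int (hU1 n)) (hfU_int (hU2 n)) (fun _ => hfF _) (hmean n) (hsecond n)
  have hL1 : Tendsto (fun n => ∫ ω, |f (U1 n ω) - f (U2 n ω)| ∂P) atTop (𝓝 0) :=
    tendsto_integral_norm_of_tendstoInMeasure_of_bound
      (fun n => ((hfU_int (hU1 n)).sub (hfU_int (hU2 n))).aestronglyMeasurable) (2 * ‖F‖)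
      (fun n => ae_of_all _ fun ω => F.dist_le_two_norm _ _)
      (tendstoInMeasure_sub_comp_of_uniformContinuous
        (CompactSpace.uniformContinuous_of_continuous hf) hdist)
  exact squeeze_zero (fun n => variance_nonneg _ P) hvar (by simpa using hL1.const_mul ‖F‖)

/-- Variance estimate used in the proof of convergence of the occupation
measure: if `f` is continuous on a compact metric space, `U¹ₙ, U²ₙ` are
identically distributed with `dist(U¹ₙ,U²ₙ) → 0` in probability, and the random
measures `μₙ` satisfy `E⟨f,μₙ⟩ = E[f(U¹ₙ)]` and
`E[(⟨f,μₙ⟩ − f(U¹ₙ))²] = E[f(U¹ₙ)² − f(U¹ₙ)f(U²ₙ)]`, then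
`Var(⟨f,μₙ⟩ − f(U¹ₙ)) → 0`. -/
theorem variance_integral_minus_point_tendsto_zero
    {Ω : Type*} [MeasurableSpace Ω] (P : Measure Ω) [IsProbabilityMeasure P]
    {K : Type*} [MetricSpace K] [CompactSpace K]
    [MeasurableSpace K] [BorelSpace K]
    (f : K → ℝ) (hf : Continuous f)
    (U1 U2 : ℕ → Ω → K)
    (hU1 : ∀ n, Measurable (U1 n)) (hU2 : ∀ n, Measurable (U2 n))
    (hid : ∀ n, IdentDistrib (U1 n) (U2 n) P P)
    (hdist : ∀ ε > (0 : ℝ),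
      Tendsto (fun n => P {ω | ε ≤ dist (U1 n ω) (U2 n ω)}) atTop (nhds 0))
    (μn : ℕ → Ω → Measure K)
    (hμprob : ∀ n ω, IsProbabilityMeasure (μn n ω))
    (hμmeas : ∀ n, Measurable fun ω => ∫ x, f x ∂(μn n ω))
    (hmean : ∀ n, (∫ ω, (∫ x, f x ∂(μn n ω)) ∂P) = ∫ ω, f (U1 n ω) ∂P)
    (hsecond : ∀ n,
      (∫ ω, ((∫ x, f x ∂(μn n ω)) - f (U1 n ω)) ^ 2 ∂P)
        = ∫ ω, (f (U1 n ω) ^ 2 - f (U1 n ω) * f (U2 n ω)) ∂P) :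
    Tendsto
      (fun n => variance (fun ω => (∫ x, f x ∂(μn n ω)) - f (U1 n ω)) P)
      atTop (nhds 0) :=
  variance_integral_minus_point_tendsto_zero_general P f hf U1 U2 hU1 hU2 hdist μn hμprob hμmeas
    hmean hsecond
end

section
/- Let ν be the distribution on ℝ₊³ with ν = δ_{(1/3,1/3,1/3)}. The Markov chain on the 2-simplex defined by C ↦ C·M, where M is uniformly one of the three matrices obtained from the identity by replacing one row by (1/3,1/3,1/3), has the uniform distribution on the simplex as its unique symmetric stationary law. Equivalently, if U is uniform on a triangle T̃, then U has the same law as a point chosen as follows: split T̃ at its centroid into three triangles, pick one uniformly, and sample U' with the corresponding rescaled law; U' is uniform on T̃. -/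
open MeasureTheory

/-- The uniform probability measure on a subset of the plane. -/
noncomputable def unifOn (s : Set (EuclideanSpace ℝ (Fin 2))) :
    Measure (EuclideanSpace ℝ (Fin 2)) :=
  (volume s)⁻¹ • volume.restrict s

open Finset ProbabilityTheory Pointwise

/-! Replacing the vertex `b i` of a simplex by a point `p` is the image of the simplex under the
affine map `x ↦ x + coord i x • (p - b i)`, whose determinant is `coord i p` by the matrix
determinant lemma; for the centroid this is `1/n`, `n` being the number of vertices. The `n`
subsimplices cover the simplex (a point lies in the one whose replaced vertex carries its smallest
barycentric coordinate), and since their volumes add up to that of the simplex, their overlaps are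
null: Lebesgue measure on the simplex is the sum of Lebesgue measure on the pieces. -/

theorem LinearMap.det_id_add_smulRight {R M : Type*} [CommRing R] [AddCommGroup M] [Module R M]
    [Module.Free R M] [Module.Finite R M] (f : M →ₗ[R] R) (x : M) :
    (LinearMap.id + f.smulRight x).det = 1 + f x := by
  classical
  let b := Module.Free.chooseBasis R M
  rw [← LinearMap.det_toMatrix b, map_add, LinearMap.toMatrix_id, LinearMap.toMatrix_smulRight,
    Matrix.vecMulVec_eq (ι := Unit), Matrix.det_one_add_replicateCol_mul_replicateRow]
  conv_rhs => rw [← b.sum_repr x]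
  simp only [dotProduct, Function.comp_apply, map_sum, map_smul, smul_eq_mul, mul_comm]

theorem MeasureTheory.Measure.restrict_eq_sum_restrict_of_eq_iUnion {α ι : Type*}
    [MeasurableSpace α] [Fintype ι] {μ : Measure α} {s : Set α} {t : ι → Set α}
    (hst : s = ⋃ i, t i) (hs : μ s ≠ ⊤) (hμ : μ s = ∑ i, μ (t i)) :
    μ.restrict s = ∑ i, μ.restrict (t i) := by
  have : IsFiniteMeasure (μ.restrict s) := isFiniteMeasure_restrict.2 hs
  refine Measure.eq_of_le_of_measure_univ_eq ?_ ?_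
  · rw [hst, ← Measure.sum_fintype]
    exact Measure.restrict_iUnion_le
  · simp [hμ]

theorem Finset.card_smul_univ_centroid {k V ι : Type*} [DivisionRing k] [CharZero k]
    [AddCommGroup V] [Module k V] [Fintype ι] [Nonempty ι] (p : ι → V) :
    (Fintype.card ι : k) • univ.centroid k p = ∑ j, p j := by
  rw [centroid_def, affineCombination_eq_linear_combination _ _ _
    (sum_centroidWeights_eq_one_of_nonempty k _ univ_nonempty), smul_sum]
  simp [smul_smul, card_univ]

section Subdivision

variable {k V ι : Type*} [Field k] [LinearOrder k] [IsStrictOrderedRing k] [AddCommGroup V]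
  [Module k V] [Fintype ι] [DecidableEq ι]

theorem AffineBasis.mem_convexHull_update_centroid (b : AffineBasis ι k V) {x : V} {i : ι}
    (hx : 0 ≤ b.coord i x) (hi : ∀ j, b.coord i x ≤ b.coord j x) :
    x ∈ convexHull k (Set.range (Function.update b i (univ.centroid k b))) := by
  have : Nonempty ι := ⟨i⟩
  set a := fun j => b.coord j x
  set n : k := (Fintype.card ι : k)
  -- `x = ∑ j ≠ i, (a j - a i) • b j + (n * a i) • centroid`
  set w : ι → k := fun j => a j - a i + if j = i then n * a i else 0
  have hupd : ∀ j, Function.update b i (univ.centroid k b) j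
      = b j + if j = i then univ.centroid k b - b i else 0 := by
    intro j; rcases eq_or_ne j i with rfl | hj <;> simp [*]
  have hcomb : ∑ j, a j • b j = x := b.linear_combination_coord_eq_self x
  have hcen : ∑ j, b j = n • univ.centroid k b := (card_smul_univ_centroid _).symm
  have hsum : ∑ j, w j • Function.update b i (univ.centroid k b) j = x := by
    simp only [hupd, w, smul_add, add_smul, sub_smul, ite_smul, zero_smul, smul_ite, smul_zero,
      sum_add_distrib, sum_sub_distrib, sum_ite_eq', mem_univ, if_true, ← smul_sum, hcomb, hcen]
    module
  rw [← hsum]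
  refine (convex_convexHull k _).sum_mem (fun j _ => ?_) ?_
    (fun j _ => subset_convexHull k _ (Set.mem_range_self j))
  · have : 0 ≤ a j - a i := sub_nonneg.2 (hi j)
    have : 0 ≤ n * a i := mul_nonneg (Nat.cast_nonneg _) hx
    simp only [w]
    split_ifs <;> linarith
  · simp only [w, sum_add_distrib, sum_sub_distrib, sum_ite_eq', mem_univ, if_true, sum_const,
      card_univ, nsmul_eq_mul, b.sum_coord_apply_eq_one x, a, n]
    ring

theorem AffineBasis.convexHull_eq_iUnion_convexHull_update_centroid (b : AffineBasis ι k V) :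
    convexHull k (Set.range b)
      = ⋃ i, convexHull k (Set.range (Function.update b i (univ.centroid k b))) := by
  have := b.nonempty
  refine subset_antisymm (fun x hx => ?_) (Set.iUnion_subset fun i => ?_)
  · rw [b.convexHull_eq_nonneg_coord] at hx
    obtain ⟨i, -, hi⟩ := exists_min_image univ (fun j => b.coord j x) univ_nonempty
    exact Set.mem_iUnion.2 ⟨i, b.mem_convexHull_update_centroid (hx i) fun j => hi j (mem_univ j)⟩
  · refine convexHull_min ?_ (convex_convexHull k _)
    rintro _ ⟨j, rfl⟩
    rcases eq_or_ne j i with rfl | hj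
    · rw [Function.update_self, b.convexHull_eq_nonneg_coord]
      intro l
      rw [b.coord_apply_centroid (mem_univ l)]
      positivity
    · rw [Function.update_of_ne hj]
      exact subset_convexHull k _ (Set.mem_range_self j)

end Subdivision

section Volume

variable {E ι : Type*} [NormedAddCommGroup E] [NormedSpace ℝ E] [MeasurableSpace E] [BorelSpace E]
  [FiniteDimensional ℝ E] (μ : Measure E) [μ.IsAddHaarMeasure]

theorem MeasureTheory.Measure.addHaar_image_affineMap (f : E →ᵃ[ℝ] E) (s : Set E) :
    μ (f '' s) = ENNReal.ofReal |LinearMap.det f.linear| * μ s := by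
  have : f '' s = f 0 +ᵥ f.linear '' s := by
    rw [← Set.image_vadd, Set.image_image]
    congr! 1 with x
    rw [f.decomp]; simp [add_comm]
  rw [this, measure_vadd, μ.addHaar_image_linearMap]

variable [DecidableEq ι]

theorem AffineBasis.addHaar_convexHull_update (b : AffineBasis ι ℝ E) (i : ι) (p : E) :
    μ (convexHull ℝ (Set.range (Function.update b i p)))
      = ENNReal.ofReal |b.coord i p| * μ (convexHull ℝ (Set.range b)) := by
  set f : E →ᵃ[ℝ] E :=
    AffineMap.id ℝ E + (LinearMap.toSpanSingleton ℝ E (p - b i)).toAffineMap.comp (b.coord i)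
  have hf : ⇑f ∘ b = Function.update b i p := by
    funext j
    rcases eq_or_ne j i with rfl | hj
    · simp [f]
    · simp [f, hj, b.coord_apply_ne hj.symm]
  have hdet : LinearMap.det f.linear = b.coord i p := by
    have : f.linear = LinearMap.id + (b.coord i).linear.smulRight (p - b i) := by
      ext v; simp [f]
    rw [this, LinearMap.det_id_add_smulRight, ← vsub_eq_sub, AffineMap.linearMap_vsub,
      b.coord_apply_eq, vsub_eq_sub, add_sub_cancel]
  rw [← hf, Set.range_comp, ← f.image_convexHull, μ.addHaar_image_affineMap, hdet]

variable [Fintype ι]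

theorem AffineBasis.addHaar_convexHull_update_centroid (b : AffineBasis ι ℝ E) (i : ι) :
    μ (convexHull ℝ (Set.range (Function.update b i (univ.centroid ℝ b))))
      = (Fintype.card ι : ENNReal)⁻¹ * μ (convexHull ℝ (Set.range b)) := by
  rw [b.addHaar_convexHull_update μ, b.coord_apply_centroid (mem_univ i), card_univ,
    abs_of_nonneg (by positivity),
    ENNReal.ofReal_inv_of_pos (by simp [Fintype.card_pos_iff, b.nonempty]), ENNReal.ofReal_natCast]

theorem AffineBasis.cond_convexHull_eq_sum_cond_update_centroid (b : AffineBasis ι ℝ E) :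
    μ[|convexHull ℝ (Set.range b)]
      = ∑ i, (Fintype.card ι : ENNReal)⁻¹ •
          μ[|convexHull ℝ (Set.range (Function.update b i (univ.centroid ℝ b)))] := by
  have hS : μ (convexHull ℝ (Set.range b)) ≠ ⊤ :=
    ((Set.finite_range b).isCompact_convexHull (𝕜 := ℝ)).measure_lt_top.ne
  have hn : (Fintype.card ι : ENNReal) ≠ 0 := by simp [Fintype.card_ne_zero, b.nonempty]
  have hpiece : ∀ i, (Fintype.card ι : ENNReal)⁻¹ •
      μ[|convexHull ℝ (Set.range (Function.update b i (univ.centroid ℝ b)))]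
        = (μ (convexHull ℝ (Set.range b)))⁻¹ •
          μ.restrict (convexHull ℝ (Set.range (Function.update b i (univ.centroid ℝ b)))) := by
    intro i
    rw [ProbabilityTheory.cond, b.addHaar_convexHull_update_centroid μ, smul_smul,
      ENNReal.mul_inv (Or.inl (ENNReal.inv_ne_zero.2 (ENNReal.natCast_ne_top _)))
        (Or.inl (ENNReal.inv_ne_top.2 hn)),
      inv_inv, ← mul_assoc, ENNReal.inv_mul_cancel hn (ENNReal.natCast_ne_top _), one_mul]
  rw [Finset.sum_congr rfl fun i _ => hpiece i, ← smul_sum, ProbabilityTheory.cond]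
  congr 1
  refine Measure.restrict_eq_sum_restrict_of_eq_iUnion
    b.convexHull_eq_iUnion_convexHull_update_centroid hS ?_
  simp only [b.addHaar_convexHull_update_centroid μ, sum_const, card_univ, nsmul_eq_mul,
    ← mul_assoc, ENNReal.mul_inv_cancel hn (ENNReal.natCast_ne_top _), one_mul]

end Volume

/-- Stationarity of the uniform law for the centroid-splitting chain
(case `ν = δ_{(1/3,1/3,1/3)}`): splitting a nondegenerate triangle `ABC` at its
centroid `M` into the three triangles `ABM`, `BCM`, `CAM`, picking one of them
uniformly at random and sampling a uniform point in it produces a uniform point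
of `ABC`.  Equivalently, the uniform law on the filled triangle is the equal
mixture of the uniform laws on the three subtriangles. -/
theorem uniform_stationary_centroid_split
    (A B C : EuclideanSpace ℝ (Fin 2)) (hind : AffineIndependent ℝ ![A, B, C])
    (M : EuclideanSpace ℝ (Fin 2)) (hM : M = (3:ℝ)⁻¹ • (A + B + C)) :
    unifOn (convexHull ℝ {A, B, C})
      = (1/3 : ENNReal) • unifOn (convexHull ℝ {A, B, M})
        + (1/3 : ENNReal) • unifOn (convexHull ℝ {B, C, M})
        + (1/3 : ENNReal) • unifOn (convexHull ℝ {C, A, M}) := by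
  let b : AffineBasis (Fin 3) ℝ (EuclideanSpace ℝ (Fin 2)) :=
    ⟨![A, B, C], hind, hind.affineSpan_eq_top_iff_card_eq_finrank_add_one.2 (by simp)⟩
  have hcentroid : univ.centroid ℝ b = M := by
    have h3 := Finset.card_smul_univ_centroid (k := ℝ) b
    rw [Fin.sum_univ_three] at h3
    rw [hM, ← show b 0 + b 1 + b 2 = A + B + C from rfl, ← h3, smul_smul]
    norm_num
  have key := b.cond_convexHull_eq_sum_cond_update_centroid volume
  have hb : ⇑b = ![A, B, C] := rfl
  have h0 : Set.range (Function.update ![A, B, C] 0 M) = {B, C, M} := by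
    ext x; simp [Fin.exists_fin_succ]; tauto
  have h1 : Set.range (Function.update ![A, B, C] 1 M) = {C, A, M} := by
    ext x; simp [Fin.exists_fin_succ]; tauto
  have h2 : Set.range (Function.update ![A, B, C] 2 M) = {A, B, M} := by
    ext x; simp [Fin.exists_fin_succ]; tauto
  have hABC : Set.range ![A, B, C] = {A, B, C} := by
    ext x; simp; tauto
  rw [hcentroid, Fin.sum_univ_three, hb, hABC, h0, h1, h2, Fintype.card_fin] at key
  have hunif : ∀ s, unifOn s = volume[|s] := fun _ => rfl
  rw [hunif, hunif, hunif, hunif, key, one_div, Nat.cast_ofNat]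
  abel
end
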